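/- Let ℓ_1,...,ℓ_N be nonnegative real numbers (per-sample losses), and let G_1,...,G_K be a partition of {1,...,N} such that every group G_k has size at least Nα, where 0 < α ≤ 1 and Nα is a positive integer. Then the maximum over k of the average loss over G_k is at most the average of the Nα largest losses, i.e., max_k (1/|G_k|) Σ_{i∈G_k} ℓ_i ≤ (1/(Nα)) Σ_{i=1}^{Nα} ℓ^{(i)}, where ℓ^{(1)} ≥ ℓ^{(2)} ≥ ... are the losses sorted in decreasing order. -/

import Mathlib

/-!
Each group is handled on its own: if `T` is the set of the `m` largest losses and `S` any set
of at least `m` indices, then `avg_S ℓ ≤ avg_T ℓ`. Subtracting the threshold `c = min_T ℓ`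
shifts both averages by `c` and makes the losses nonnegative on `T` and nonpositive off `T`;
then `∑_S ≤ ∑_{S ∪ T} ≤ ∑_T`, and dividing the nonnegative `∑_T` by `#S ≥ #T` instead of `#T`
only makes it smaller.
-/

open Finset

namespace Finset

variable {ι 𝕜 : Type*} [Field 𝕜] [LinearOrder 𝕜] [IsStrictOrderedRing 𝕜]
  {s t : Finset ι} {f : ι → 𝕜}

theorem sum_div_card_le_sum_div_card_of_nonneg_of_nonpos (ht : t.Nonempty) (hts : #t ≤ #s)
    (hf_nonneg : ∀ i ∈ t, 0 ≤ f i) (hf_nonpos : ∀ i ∉ t, f i ≤ 0) :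
    (∑ i ∈ s, f i) / #s ≤ (∑ i ∈ t, f i) / #t := by
  classical
  have hsum : ∑ i ∈ s, f i ≤ ∑ i ∈ t, f i :=
    calc ∑ i ∈ s, f i
        ≤ ∑ i ∈ s ∪ t, f i := sum_le_sum_of_subset_of_nonneg subset_union_left
          fun i hi his => hf_nonneg i ((mem_union.1 hi).resolve_left his)
      _ ≤ ∑ i ∈ t, f i := sum_le_sum_of_subset_of_nonpos' subset_union_right
          fun i _ hit => hf_nonpos i hit
  have ht_pos : (0 : 𝕜) < #t := by exact_mod_cast ht.card_pos
  calc (∑ i ∈ s, f i) / #s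
      ≤ (∑ i ∈ t, f i) / #s := div_le_div_of_nonneg_right hsum (Nat.cast_nonneg _)
    _ ≤ (∑ i ∈ t, f i) / #t :=
        div_le_div_of_nonneg_left (sum_nonneg hf_nonneg) ht_pos (by exact_mod_cast hts)

theorem sum_sub_const_div_card (hs : s.Nonempty) (c : 𝕜) :
    (∑ i ∈ s, (f i - c)) / #s = (∑ i ∈ s, f i) / #s - c := by
  have hs_ne : (#s : 𝕜) ≠ 0 := by exact_mod_cast hs.card_pos.ne'
  rw [sum_sub_distrib, sum_const, nsmul_eq_mul, sub_div, mul_div_cancel_left₀ _ hs_ne]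

theorem sum_div_card_le_sum_div_card_of_forall_le (ht : t.Nonempty) (hts : #t ≤ #s)
    (hf : ∀ i ∈ t, ∀ j ∉ t, f j ≤ f i) :
    (∑ i ∈ s, f i) / #s ≤ (∑ i ∈ t, f i) / #t := by
  have hs : s.Nonempty := card_pos.1 (ht.card_pos.trans_le hts)
  set c := t.inf' ht f
  have hshift := sum_div_card_le_sum_div_card_of_nonneg_of_nonpos (f := fun i => f i - c) ht hts
    (fun i hi => sub_nonneg.2 (inf'_le f hi))
    (fun j hj => sub_nonpos.2 (le_inf' ht f fun i hi => hf i hi j hj))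
  simpa only [sum_sub_const_div_card hs, sum_sub_const_div_card ht, sub_le_sub_iff_right]
    using hshift

end Finset

theorem worst_group_avg_le_top_m_avg_general (N K m : ℕ) (hm : 0 < m)
    (ℓ : Fin N → ℝ)
    (G : Fin K → Finset (Fin N))
    (hGsize : ∀ k, m ≤ (G k).card)
    (σ : Equiv.Perm (Fin N))
    (hσ : ∀ i j : Fin N, i ≤ j → ℓ (σ j) ≤ ℓ (σ i)) :
    ∀ k : Fin K,
      (1 / ((G k).card : ℝ)) * ∑ i ∈ G k, ℓ i ≤
        (1 / (m : ℝ)) * ∑ i ∈ Finset.univ.filter (fun i : Fin N => (i : ℕ) < m), ℓ (σ i) := by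
  intro k
  set I := univ.filter fun i : Fin N => (i : ℕ) < m
  have hmN : m ≤ N := (hGsize k).trans (card_le_univ _) |>.trans_eq (Fintype.card_fin N)
  have hI : #(I.map σ.toEmbedding) = m := by
    rw [card_map, Fin.card_filter_val_lt, min_eq_right hmN]
  have htop : ∀ i ∈ I.map σ.toEmbedding, ∀ j ∉ I.map σ.toEmbedding, ℓ j ≤ ℓ i := by
    simp only [I, mem_map_equiv, mem_filter, mem_univ, true_and, not_lt]
    intro i hi j hj
    simpa using hσ _ _ (Fin.le_def.2 (hi.le.trans hj))
  have havg := sum_div_card_le_sum_div_card_of_forall_le (s := G k)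
    (card_pos.1 (hI ▸ hm)) (hI.trans_le (hGsize k)) htop
  rw [sum_map, hI, Equiv.coe_toEmbedding] at havg
  rwa [one_div_mul_eq_div, one_div_mul_eq_div]

/-- The worst-group average loss is bounded by the average of the `m` largest losses,
provided every group has size at least `m`. Here `σ` is a permutation sorting the
losses in decreasing order. -/
theorem worst_group_avg_le_top_m_avg (N K m : ℕ) (hN : 0 < N) (hm : 0 < m)
    (ℓ : Fin N → ℝ) (hℓ : ∀ i, 0 ≤ ℓ i)
    (G : Fin K → Finset (Fin N))
    (hGne : ∀ k, (G k).Nonempty)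
    (hGdisj : ∀ k k', k ≠ k' → Disjoint (G k) (G k'))
    (hGcover : Finset.univ.biUnion G = Finset.univ)
    (hGsize : ∀ k, m ≤ (G k).card)
    (σ : Equiv.Perm (Fin N))
    (hσ : ∀ i j : Fin N, i ≤ j → ℓ (σ j) ≤ ℓ (σ i)) :
    ∀ k : Fin K,
      (1 / ((G k).card : ℝ)) * ∑ i ∈ G k, ℓ i ≤
        (1 / (m : ℝ)) * ∑ i ∈ Finset.univ.filter (fun i : Fin N => (i : ℕ) < m), ℓ (σ i) :=
  worst_group_avg_le_top_m_avg_general N K m hm ℓ G hGsize σ hσ
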